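/- arXiv:2111.10238 — 3 statements merged into one kernel-verified Lean document; each statement's English description precedes it below -/
import Mathlib

section
/- Second-order necessary condition: Suppose x̄ is a local minimizer of Φ := F + G satisfying the quadratic growth condition Φ(x) ≥ Φ(x̄) + (c/2)‖x − x̄‖²_X for all x ∈ B_ε(x̄), for some c ≥ 0 and ε > 0. Assume further that either (i) the map h ↦ F''(x̄)(h,h) is sequentially weak-* upper semicontinuous on X, or (ii) G is strongly twice epi-differentiable at x̄ for −F'(x̄). Then F''(x̄)(h,h) + G''(x̄, −F'(x̄); h) ≥ c‖h‖²_X for all h ∈ X. -/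
open Filter Topology

/-- The weak-* second subderivative `G''(x, w; h)` of `G : X → (−∞,∞]` on the dual
`X = Y*`, at `x` for `w ∈ Y`, in direction `h`:
`inf { liminf_k [G(x + t_k h_k) − G(x) − t_k ⟨w, h_k⟩]/(t_k²/2) : t_k ↓ 0, h_k ⇀* h }`. -/
noncomputable def weakStarSecondSubderiv {Y : Type*} [NormedAddCommGroup Y] [NormedSpace ℝ Y]
    (G : (Y →L[ℝ] ℝ) → EReal) (x : Y →L[ℝ] ℝ) (w : Y) (h : Y →L[ℝ] ℝ) : EReal :=
  sInf { L : EReal | ∃ (t : ℕ → ℝ) (hs : ℕ → (Y →L[ℝ] ℝ)),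
    (∀ k, 0 < t k) ∧ Tendsto t atTop (𝓝 0) ∧
    (∀ z : Y, Tendsto (fun k => hs k z) atTop (𝓝 (h z))) ∧
    L = liminf (fun k => (((2 / (t k) ^ 2 : ℝ)) : EReal) *
          (G (x + t k • hs k) - G x - (((t k * hs k w : ℝ)) : EReal))) atTop }

/-- `G` is strongly twice epi-differentiable at `x` for `w`: for every direction `h` and
every `t_k ↓ 0` there is a strongly convergent recovery sequence `h_k → h` realizing
`G''(x, w; h)` as a limit of second-order difference quotients. -/
def StronglyTwiceEpiDiff {Y : Type*} [NormedAddCommGroup Y] [NormedSpace ℝ Y]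
    (G : (Y →L[ℝ] ℝ) → EReal) (x : Y →L[ℝ] ℝ) (w : Y) : Prop :=
  ∀ h : Y →L[ℝ] ℝ, ∀ t : ℕ → ℝ, (∀ k, 0 < t k) → Tendsto t atTop (𝓝 0) →
    ∃ hs : ℕ → (Y →L[ℝ] ℝ), Tendsto hs atTop (𝓝 h) ∧
      Tendsto (fun k => (((2 / (t k) ^ 2 : ℝ)) : EReal) *
          (G (x + t k • hs k) - G x - (((t k * hs k w : ℝ)) : EReal))) atTop
        (𝓝 (weakStarSecondSubderiv G x w h))

/-!
Along any `t_k ↓ 0`, `h_k ⇀* h`, quadratic growth at `x̄ + t_k h_k` combined with the Taylor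
expansion of `F` gives
`c‖h_k‖² ≤ F''(x̄)(h_k,h_k) + o(1) + [G(x̄ + t_k h_k) − G(x̄) + t_k⟨F'(x̄), h_k⟩]/(t_k²/2)`.
The points stay in the ball `B_ε(x̄)` because weak-* convergent sequences are bounded
(Banach–Steinhaus), and the norm is weak-* lower semicontinuous, so in the limit
`c‖h‖² − F''(x̄)(h,h)` bounds the liminf of the last quotient provided
`limsup F''(x̄)(h_k,h_k) ≤ F''(x̄)(h,h)`. Under (i) this holds for every weak-* convergent
sequence, which bounds the infimum defining `G''`; under (ii) it holds for the strongly
convergent recovery sequence, along which the quotients converge to `G''`.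
-/

section WeakStarConvergence

variable {ι E : Type*} [NormedAddCommGroup E] [NormedSpace ℝ E]

theorem eventually_lt_opNorm_of_tendsto_apply {l : Filter ι} {hs : ι → E →L[ℝ] ℝ}
    {h : E →L[ℝ] ℝ} (hpw : ∀ z, Tendsto (fun k => hs k z) l (𝓝 (h z))) {r : ℝ}
    (hr : r < ‖h‖) : ∀ᶠ k in l, r < ‖hs k‖ := by
  obtain ⟨z, hz, hrz⟩ := h.exists_lt_apply_of_lt_opNorm hr
  filter_upwards [(hpw z).norm.eventually_const_lt hrz] with k hk
  exact hk.trans_le ((hs k).unit_le_opNorm z hz.le)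

theorem eventually_lt_mul_opNorm_sq_of_tendsto_apply {l : Filter ι} {hs : ι → E →L[ℝ] ℝ}
    {h : E →L[ℝ] ℝ} (hpw : ∀ z, Tendsto (fun k => hs k z) l (𝓝 (h z))) {c a : ℝ}
    (hc : 0 ≤ c) (ha : a < c * ‖h‖ ^ 2) : ∀ᶠ k in l, a < c * ‖hs k‖ ^ 2 := by
  rcases lt_or_ge a 0 with ha0 | ha0
  · exact .of_forall fun k => ha0.trans_le (by positivity)
  have hc0 : 0 < c := by
    by_contra! hc0
    nlinarith [sq_nonneg ‖h‖]
  have hr : √(a / c) < ‖h‖ := by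
    rw [← Real.sqrt_sq (norm_nonneg h)]
    exact Real.sqrt_lt_sqrt (by positivity) ((div_lt_iff₀' hc0).2 ha)
  filter_upwards [eventually_lt_opNorm_of_tendsto_apply hpw hr] with k hk
  exact (div_lt_iff₀' hc0).1 (Real.lt_sq_of_sqrt_lt hk)

theorem tendsto_smul_zero_of_tendsto_apply [CompleteSpace E] {t : ℕ → ℝ}
    {hs : ℕ → E →L[ℝ] ℝ} {h : E →L[ℝ] ℝ} (ht : Tendsto t atTop (𝓝 0))
    (hpw : ∀ z, Tendsto (fun k => hs k z) atTop (𝓝 (h z))) :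
    Tendsto (fun k => t k • hs k) atTop (𝓝 0) := by
  obtain ⟨C, hC⟩ := banach_steinhaus fun z => by
    obtain ⟨C, hC⟩ := (hpw z).norm.bddAbove_range
    exact ⟨C, fun k => hC ⟨k, rfl⟩⟩
  exact ht.zero_smul_isBoundedUnder_le (isBoundedUnder_of ⟨C, hC⟩)

end WeakStarConvergence

theorem EReal.exists_eq_coe_of_coe_mul_sub_sub_le {a u v b : ℝ} (ha : 0 < a) {y : EReal}
    (hy : y ≠ ⊥) (h : (a : EReal) * (y - u - v) ≤ b) :
    ∃ g : ℝ, y = g ∧ a * (g - u - v) ≤ b := by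
  induction y using EReal.rec with
  | bot => exact absurd rfl hy
  | top => simp [EReal.coe_mul_top_of_pos ha] at h
  | coe g => exact ⟨g, rfl, by exact_mod_cast h⟩

def QuadraticGrowth {X : Type*} [SeminormedAddCommGroup X] (F : X → ℝ) (G : X → EReal)
    (xbar : X) (c ε : ℝ) : Prop :=
  ∀ x, ‖x - xbar‖ ≤ ε →
    ((F xbar : ℝ) : EReal) + G xbar + ((c / 2 * ‖x - xbar‖ ^ 2 : ℝ) : EReal) ≤ F x + G x

section SecondOrderCondition

variable {Y : Type*} [NormedAddCommGroup Y] [NormedSpace ℝ Y]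

noncomputable def secondOrderQuotient (G : (Y →L[ℝ] ℝ) → EReal) (x : Y →L[ℝ] ℝ) (w : Y)
    (t : ℝ) (v : Y →L[ℝ] ℝ) : EReal :=
  ((2 / t ^ 2 : ℝ) : EReal) * (G (x + t • v) - G x - ((t * v w : ℝ) : EReal))

noncomputable def taylorQuotient (F : (Y →L[ℝ] ℝ) → ℝ) (x : Y →L[ℝ] ℝ) (F' : Y)
    (F'' : (Y →L[ℝ] ℝ) →L[ℝ] (Y →L[ℝ] ℝ) →L[ℝ] ℝ) (t : ℝ) (v : Y →L[ℝ] ℝ) : ℝ :=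
  (F (x + t • v) - F x - t * v F' - (1 / 2) * t ^ 2 * F'' v v) / t ^ 2

def HasWeakStarTaylorExpansionWithin (F : (Y →L[ℝ] ℝ) → ℝ) (F' : Y)
    (F'' : (Y →L[ℝ] ℝ) →L[ℝ] (Y →L[ℝ] ℝ) →L[ℝ] ℝ) (s : Set (Y →L[ℝ] ℝ)) (x : Y →L[ℝ] ℝ) :
    Prop :=
  ∀ (t : ℕ → ℝ) (hs : ℕ → (Y →L[ℝ] ℝ)) (h : Y →L[ℝ] ℝ), (∀ k, 0 < t k) →
    Tendsto t atTop (𝓝 0) → (∀ z : Y, Tendsto (fun k => hs k z) atTop (𝓝 (h z))) →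
    (∀ k, x + t k • hs k ∈ s) →
    Tendsto (fun k => taylorQuotient F x F' F'' (t k) (hs k)) atTop (𝓝 0)

variable {G : (Y →L[ℝ] ℝ) → EReal} {F : (Y →L[ℝ] ℝ) → ℝ} {xbar : Y →L[ℝ] ℝ} {F' : Y}
  {F'' : (Y →L[ℝ] ℝ) →L[ℝ] (Y →L[ℝ] ℝ) →L[ℝ] ℝ} {c ε b : ℝ}

theorem ne_top_of_secondOrderQuotient_le {x : Y →L[ℝ] ℝ} {w : Y} {t : ℝ}
    {v : Y →L[ℝ] ℝ} (hx : G x ≠ ⊤) (ht : 0 < t) (hQ : secondOrderQuotient G x w t v ≤ b) :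
    G (x + t • v) ≠ ⊤ := by
  intro htop
  rw [secondOrderQuotient, htop, EReal.top_sub hx, EReal.top_sub_coe,
    EReal.coe_mul_top_of_pos (by positivity)] at hQ
  exact EReal.coe_lt_top b |>.not_ge hQ

theorem mul_norm_sq_le_of_secondOrderQuotient_le (hGbot : ∀ x, G x ≠ ⊥) (hxbar : G xbar ≠ ⊤)
    (hgrowth : QuadraticGrowth F G xbar c ε) {t : ℝ} {v : Y →L[ℝ] ℝ} (ht : 0 < t) (hv : ‖t • v‖ ≤ ε)
    (hQ : secondOrderQuotient G xbar (-F') t v ≤ b) :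
    c * ‖v‖ ^ 2 ≤ F'' v v + 2 * taylorQuotient F xbar F' F'' t v + b := by
  have hgrowth_t := hgrowth (xbar + t • v) (by simpa using hv)
  unfold secondOrderQuotient at hQ
  lift G xbar to ℝ using ⟨hxbar, hGbot xbar⟩ with g₀
  obtain ⟨g, hg, hq⟩ := EReal.exists_eq_coe_of_coe_mul_sub_sub_le (by positivity)
    (hGbot (xbar + t • v)) hQ
  rw [hg, add_sub_cancel_left, norm_smul, Real.norm_of_nonneg ht.le] at hgrowth_t
  norm_cast at hgrowth_t
  have ht2 : 0 < t ^ 2 := by positivity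
  have hr : taylorQuotient F xbar F' F'' t v * t ^ 2
      = F (xbar + t • v) - F xbar - t * v F' - (1 / 2) * t ^ 2 * F'' v v :=
    div_mul_cancel₀ _ ht2.ne'
  rw [map_neg, div_mul_eq_mul_div, div_le_iff₀ ht2] at hq
  nlinarith

theorem sub_le_of_forall_secondOrderQuotient_le [CompleteSpace Y]
    (hGbot : ∀ x, G x ≠ ⊥) (hxbar : G xbar ≠ ⊤)
    (hTaylor : HasWeakStarTaylorExpansionWithin F F' F'' {x | G x ≠ ⊤} xbar)
    (hc : 0 ≤ c) (hε : 0 < ε) (hgrowth : QuadraticGrowth F G xbar c ε)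
    {t : ℕ → ℝ} {hs : ℕ → (Y →L[ℝ] ℝ)} {h : Y →L[ℝ] ℝ} (ht0 : ∀ k, 0 < t k)
    (htt : Tendsto t atTop (𝓝 0)) (hpw : ∀ z : Y, Tendsto (fun k => hs k z) atTop (𝓝 (h z)))
    (hQ : ∀ k, secondOrderQuotient G xbar (-F') (t k) (hs k) ≤ b)
    (husc : limsup (fun k => ((F'' (hs k) (hs k) : ℝ) : EReal)) atTop ≤ F'' h h) :
    c * ‖h‖ ^ 2 - F'' h h ≤ b := by
  have hr : Tendsto (fun k => taylorQuotient F xbar F' F'' (t k) (hs k)) atTop (𝓝 0) :=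
    hTaylor t hs h ht0 htt hpw fun k => ne_top_of_secondOrderQuotient_le hxbar (ht0 k) (hQ k)
  have hineq : ∀ᶠ k in atTop,
      c * ‖hs k‖ ^ 2 ≤ F'' (hs k) (hs k) + 2 * taylorQuotient F xbar F' F'' (t k) (hs k) + b := by
    filter_upwards [(tendsto_smul_zero_of_tendsto_apply htt hpw).norm.eventually_le_const
      (by simpa using hε)] with k hk
    exact mul_norm_sq_le_of_secondOrderQuotient_le hGbot hxbar hgrowth (ht0 k) hk (hQ k)
  suffices ∀ a < c * ‖h‖ ^ 2 - b, a ≤ F'' h h by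
    linarith [le_of_forall_lt_imp_le_of_dense this]
  intro a ha
  obtain ⟨δ, hδ, rfl⟩ : ∃ δ > 0, a = c * ‖h‖ ^ 2 - b - 4 * δ :=
    ⟨(c * ‖h‖ ^ 2 - b - a) / 4, by linarith, by ring⟩
  have hlow : ∀ᶠ k in atTop, ((c * ‖h‖ ^ 2 - b - 4 * δ : ℝ) : EReal) ≤ F'' (hs k) (hs k) := by
    filter_upwards [hineq, hr.eventually_lt_const hδ,
      eventually_lt_mul_opNorm_sq_of_tendsto_apply hpw hc
        (show c * ‖h‖ ^ 2 - 2 * δ < c * ‖h‖ ^ 2 by linarith)] with k h₁ h₂ h₃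
    exact EReal.coe_le_coe_iff.2 (by linarith)
  exact_mod_cast (le_limsup_of_frequently_le hlow.frequently).trans husc

theorem le_liminf_secondOrderQuotient [CompleteSpace Y]
    (hGbot : ∀ x, G x ≠ ⊥) (hxbar : G xbar ≠ ⊤)
    (hTaylor : HasWeakStarTaylorExpansionWithin F F' F'' {x | G x ≠ ⊤} xbar)
    (hc : 0 ≤ c) (hε : 0 < ε) (hgrowth : QuadraticGrowth F G xbar c ε)
    {t : ℕ → ℝ} {hs : ℕ → (Y →L[ℝ] ℝ)} {h : Y →L[ℝ] ℝ} (ht0 : ∀ k, 0 < t k)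
    (htt : Tendsto t atTop (𝓝 0)) (hpw : ∀ z : Y, Tendsto (fun k => hs k z) atTop (𝓝 (h z)))
    (husc : limsup (fun k => ((F'' (hs k) (hs k) : ℝ) : EReal)) atTop ≤ F'' h h) :
    ((c * ‖h‖ ^ 2 - F'' h h : ℝ) : EReal)
      ≤ liminf (fun k => secondOrderQuotient G xbar (-F') (t k) (hs k)) atTop := by
  refine EReal.le_of_forall_lt_iff_le.1 fun b hb => ?_
  -- pass to a subsequence on which every point lies in `dom G`, as `hTaylor` requires
  obtain ⟨φ, hφ, hφb⟩ := extraction_of_frequently_atTop (frequently_lt_of_liminf_lt (h := hb))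
  have hφt := hφ.tendsto_atTop
  exact_mod_cast sub_le_of_forall_secondOrderQuotient_le hGbot hxbar hTaylor hc hε hgrowth
    (fun k => ht0 (φ k)) (htt.comp hφt) (fun z => (hpw z).comp hφt) (fun k => (hφb k).le)
    (hφt.limsup_comp_le_limsup.trans husc)

end SecondOrderCondition

theorem second_order_necessary_condition_general
    {Y : Type*} [NormedAddCommGroup Y] [NormedSpace ℝ Y] [CompleteSpace Y]
    (G : (Y →L[ℝ] ℝ) → EReal) (hGbot : ∀ x, G x ≠ ⊥)
    (F : (Y →L[ℝ] ℝ) → ℝ)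
    (xbar : Y →L[ℝ] ℝ) (hxbar : G xbar ≠ ⊤)
    (F' : Y) (F'' : (Y →L[ℝ] ℝ) →L[ℝ] (Y →L[ℝ] ℝ) →L[ℝ] ℝ)
    (hTaylor : ∀ (t : ℕ → ℝ) (hs : ℕ → (Y →L[ℝ] ℝ)) (h : Y →L[ℝ] ℝ),
      (∀ k, 0 < t k) → Tendsto t atTop (𝓝 0) →
      (∀ z : Y, Tendsto (fun k => hs k z) atTop (𝓝 (h z))) →
      (∀ k, G (xbar + t k • hs k) ≠ ⊤) →
      Tendsto (fun k => (F (xbar + t k • hs k) - F xbar - t k * hs k F'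
          - (1 / 2) * (t k) ^ 2 * F'' (hs k) (hs k)) / (t k) ^ 2) atTop (𝓝 0))
    (c ε : ℝ) (hc : 0 ≤ c) (hε : 0 < ε)
    (hgrowth : ∀ x : Y →L[ℝ] ℝ, ‖x - xbar‖ ≤ ε →
      ((F xbar : ℝ) : EReal) + G xbar + ((c / 2 * ‖x - xbar‖ ^ 2 : ℝ) : EReal)
        ≤ ((F x : ℝ) : EReal) + G x)
    (hAlt :
      (∀ (h : Y →L[ℝ] ℝ) (hs : ℕ → (Y →L[ℝ] ℝ)),
        (∀ z : Y, Tendsto (fun k => hs k z) atTop (𝓝 (h z))) →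
        limsup (fun k => ((F'' (hs k) (hs k) : ℝ) : EReal)) atTop
          ≤ ((F'' h h : ℝ) : EReal))
      ∨ StronglyTwiceEpiDiff G xbar (-F')) :
    ∀ h : Y →L[ℝ] ℝ,
      ((c * ‖h‖ ^ 2 : ℝ) : EReal)
        ≤ ((F'' h h : ℝ) : EReal) + weakStarSecondSubderiv G xbar (-F') h := by
  intro h
  have hsplit : ((c * ‖h‖ ^ 2 : ℝ) : EReal) = F'' h h + ((c * ‖h‖ ^ 2 - F'' h h : ℝ) : EReal) := by
    norm_cast; ring
  rw [hsplit]
  gcongr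
  rcases hAlt with husc | hste
  · refine le_sInf ?_
    rintro _ ⟨t, hs, ht0, htt, hpw, rfl⟩
    exact le_liminf_secondOrderQuotient hGbot hxbar hTaylor hc hε hgrowth ht0 htt hpw
      (husc h hs hpw)
  · obtain ⟨hs, hconv, hQ⟩ := hste h (fun k => 1 / ((k : ℝ) + 1)) (fun k => by positivity)
      tendsto_one_div_add_atTop_nhds_zero_nat
    have hF'' : Tendsto (fun k => F'' (hs k) (hs k)) atTop (𝓝 (F'' h h)) :=
      ((F''.continuous.clm_apply continuous_id).tendsto h).comp hconv
    rw [← hQ.liminf_eq]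
    exact le_liminf_secondOrderQuotient hGbot hxbar hTaylor hc hε hgrowth
      (fun k => by positivity) tendsto_one_div_add_atTop_nhds_zero_nat
      (fun z => ((ContinuousLinearMap.apply ℝ ℝ z).continuous.tendsto h).comp hconv)
      (EReal.tendsto_coe.2 hF'').limsup_eq.le

/-- Theorem 2.4, second-order necessary condition.
`X = Y*` with `Y` a separable Banach space; `xbar ∈ dom G`; `F` admits the Taylor-type
expansion `hTaylor` with `F'(xbar) ∈ Y` and bounded bilinear `F''(xbar)`.  If `xbar` satisfies the
quadratic growth condition with constants `c ≥ 0`, `ε > 0` and either (i) `h ↦ F''(xbar)h²`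
is sequentially weak-* upper semicontinuous or (ii) `G` is strongly twice
epi-differentiable at `xbar` for `−F'(xbar)`, then
`F''(xbar)h² + G''(xbar, −F'(xbar); h) ≥ c‖h‖²` for all `h ∈ X`. -/
theorem second_order_necessary_condition
    {Y : Type*} [NormedAddCommGroup Y] [NormedSpace ℝ Y] [CompleteSpace Y]
    [TopologicalSpace.SeparableSpace Y]
    (G : (Y →L[ℝ] ℝ) → EReal) (hGbot : ∀ x, G x ≠ ⊥)
    (F : (Y →L[ℝ] ℝ) → ℝ)
    (xbar : Y →L[ℝ] ℝ) (hxbar : G xbar ≠ ⊤)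
    (F' : Y) (F'' : (Y →L[ℝ] ℝ) →L[ℝ] (Y →L[ℝ] ℝ) →L[ℝ] ℝ)
    (hTaylor : ∀ (t : ℕ → ℝ) (hs : ℕ → (Y →L[ℝ] ℝ)) (h : Y →L[ℝ] ℝ),
      (∀ k, 0 < t k) → Tendsto t atTop (𝓝 0) →
      (∀ z : Y, Tendsto (fun k => hs k z) atTop (𝓝 (h z))) →
      (∀ k, G (xbar + t k • hs k) ≠ ⊤) →
      Tendsto (fun k => (F (xbar + t k • hs k) - F xbar - t k * hs k F'
          - (1 / 2) * (t k) ^ 2 * F'' (hs k) (hs k)) / (t k) ^ 2) atTop (𝓝 0))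
    (c ε : ℝ) (hc : 0 ≤ c) (hε : 0 < ε)
    (hgrowth : ∀ x : Y →L[ℝ] ℝ, ‖x - xbar‖ ≤ ε →
      ((F xbar : ℝ) : EReal) + G xbar + ((c / 2 * ‖x - xbar‖ ^ 2 : ℝ) : EReal)
        ≤ ((F x : ℝ) : EReal) + G x)
    (hAlt :
      (∀ (h : Y →L[ℝ] ℝ) (hs : ℕ → (Y →L[ℝ] ℝ)),
        (∀ z : Y, Tendsto (fun k => hs k z) atTop (𝓝 (h z))) →
        limsup (fun k => ((F'' (hs k) (hs k) : ℝ) : EReal)) atTop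
          ≤ ((F'' h h : ℝ) : EReal))
      ∨ StronglyTwiceEpiDiff G xbar (-F')) :
    ∀ h : Y →L[ℝ] ℝ,
      ((c * ‖h‖ ^ 2 : ℝ) : EReal)
        ≤ ((F'' h h : ℝ) : EReal) + weakStarSecondSubderiv G xbar (-F') h :=
  second_order_necessary_condition_general G hGbot F xbar hxbar F' F'' hTaylor c ε hc hε hgrowth
    hAlt
end

section
/- Let j ∈ C¹(ℝ) with locally Lipschitz continuous derivative j', and let w, z ∈ ℝ. Then the following are equivalent: (i) j''(w; z) := lim_{t↓0} (2/t²)( j(w + t z) − j(w) − t j'(w) z ) exists in ℝ; (ii) D²j(w; z) := lim_{t↓0} ( j'(w + t z) − j'(w) ) / t exists in ℝ. Moreover, in this case j''(w; z) = D²j(w; z) · z. -/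
/-!
Write `h t = j (w + t z) - j w - t j'(w) z`, so that `h 0 = 0` and `h' t = (j'(w + t z) - j' w) z`.
If `h' t / t` converges, L'Hôpital's rule gives the same limit for `h t / (t² / 2)`.
L'Hôpital's rule has no converse in general; here it holds because `h'` is Lipschitz near `0`:
after subtracting the limit `L t² / 2` from `h`, a function `g = o(t²)` with Lipschitz derivative
has `g' = o(t)`, by comparing `g` at `t` and `(1 + η) t` and letting `η → 0`.
-/

open Filter Topology Set Asymptotics
open scoped NNReal

theorem abs_sub_sub_mul_le_of_lipschitzOnWith {g G : ℝ → ℝ} {K : ℝ≥0} {a b : ℝ} (hab : a ≤ b)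
    (hg : ∀ x ∈ Icc a b, HasDerivAt g (G x) x) (hG : LipschitzOnWith K G (Icc a b)) :
    |g b - g a - G a * (b - a)| ≤ K * (b - a) ^ 2 := by
  have hφ : ∀ x ∈ Icc a b,
      HasDerivWithinAt (fun x => g x - G a * x) (G x - G a) (Icc a b) x := fun x hx =>
    ((hg x hx).sub ((hasDerivAt_id x).const_mul (G a))).hasDerivWithinAt.congr_deriv (by simp)
  have hbound : ∀ x ∈ Ico a b, ‖G x - G a‖ ≤ K * (b - a) := fun x hx => by
    have hxa := hG.dist_le_mul x (Ico_subset_Icc_self hx) a (left_mem_Icc.mpr hab)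
    rw [Real.dist_eq, Real.dist_eq, abs_of_nonneg (sub_nonneg.mpr hx.1)] at hxa
    rw [Real.norm_eq_abs]
    exact hxa.trans (by gcongr; exact hx.2.le)
  have := norm_image_sub_le_of_norm_deriv_le_segment' hφ hbound b (right_mem_Icc.mpr hab)
  rw [Real.norm_eq_abs] at this
  calc |g b - g a - G a * (b - a)| = |g b - G a * b - (g a - G a * a)| := by ring_nf
    _ ≤ K * (b - a) * (b - a) := this
    _ = K * (b - a) ^ 2 := by ring

theorem isLittleO_id_nhdsGT_of_isLittleO_sq {g G : ℝ → ℝ} (hg : ∀ t, HasDerivAt g (G t) t)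
    (hG : LocallyLipschitz G) (hsq : g =o[𝓝[>] 0] fun t => t ^ 2) : G =o[𝓝[>] 0] id := by
  rw [isLittleO_iff]
  intro c hc
  obtain ⟨K, s, hs, hKs⟩ := hG 0
  obtain ⟨l, u, ⟨hl, hu⟩, hsub⟩ := mem_nhds_iff_exists_Ioo_subset.mp hs
  obtain ⟨η, hη, hη1, hKη⟩ : ∃ η : ℝ, 0 < η ∧ η ≤ 1 ∧ K * η ≤ c / 2 := by
    refine ⟨min 1 (c / (2 * (K + 1))), by positivity, min_le_left _ _, ?_⟩
    calc (K : ℝ) * min 1 (c / (2 * (K + 1))) ≤ (K + 1) * (c / (2 * (K + 1))) := by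
          gcongr
          · linarith
          · exact min_le_right _ _
      _ = c / 2 := by field_simp
  have hnear : ∀ᶠ t in 𝓝[>] 0, t ∈ Ioo 0 u := Ioo_mem_nhdsGT hu
  have hsmall : ∀ᶠ t in 𝓝[>] (0 : ℝ), |g t| ≤ c * η / 10 * t ^ 2 := by
    simpa using hsq.def (by positivity : 0 < c * η / 10)
  filter_upwards [hnear, hsmall,
    eventually_nhdsGT_zero_mul_left (by positivity : 0 < 1 + η) (hnear.and hsmall)]
    with t ht hgt hscaled
  obtain ⟨ht0, -⟩ := ht
  obtain ⟨⟨-, hsu⟩, hgs⟩ := hscaled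
  have hts : t ≤ (1 + η) * t := by nlinarith
  have hIcc : Icc t ((1 + η) * t) ⊆ s := fun x hx => hsub ⟨by linarith [hx.1], by linarith [hx.2]⟩
  have hmvt := abs_sub_sub_mul_le_of_lipschitzOnWith hts (fun x _ => hg x) (hKs.mono hIcc)
  -- `G t · η t` is `g ((1 + η) t) - g t` up to `K (η t)²`, and `η ≤ 1` bounds both values of `g`
  -- by `(c η / 10) · 4 t²`.
  have hstep : (1 + η) * t - t = η * t := by ring
  rw [hstep] at hmvt
  have key : |G t| * (η * t) ≤ c * t * (η * t) := calc
    |G t| * (η * t) = |G t * (η * t)| := by rw [abs_mul, abs_of_pos (by positivity : 0 < η * t)]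
    _ = |(g ((1 + η) * t) - g t) - (g ((1 + η) * t) - g t - G t * (η * t))| := by
      rw [sub_sub_cancel]
    _ ≤ |g ((1 + η) * t) - g t| + |g ((1 + η) * t) - g t - G t * (η * t)| := abs_sub _ _
    _ ≤ |g ((1 + η) * t)| + |g t| + K * (η * t) ^ 2 := by gcongr; exact abs_sub _ _
    _ ≤ c * η / 10 * ((1 + η) * t) ^ 2 + c * η / 10 * t ^ 2 + K * (η * t) ^ 2 := by gcongr
    _ = η * t ^ 2 * (c / 10 * (1 + η) ^ 2 + c / 10 + K * η) := by ring
    _ ≤ η * t ^ 2 * c := by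
      have : c / 10 * (1 + η) ^ 2 ≤ c / 10 * 2 ^ 2 := by gcongr; linarith
      gcongr
      linarith
    _ = c * t * (η * t) := by ring
  rw [Real.norm_eq_abs, id, Real.norm_eq_abs, abs_of_pos ht0]
  exact le_of_mul_le_mul_right key (by positivity)

theorem tendsto_deriv_div_of_tendsto_two_div_sq_mul {f f' : ℝ → ℝ} {L : ℝ}
    (hf : ∀ t, HasDerivAt f (f' t) t) (hf' : LocallyLipschitz f')
    (h : Tendsto (fun t => 2 / t ^ 2 * f t) (𝓝[>] 0) (𝓝 L)) :
    Tendsto (fun t => f' t / t) (𝓝[>] 0) (𝓝 L) := by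
  have hpos : ∀ᶠ t in 𝓝[>] (0 : ℝ), 0 < t := eventually_mem_nhdsWithin
  have hg : ∀ t, HasDerivAt (fun t => f t - L / 2 * t ^ 2) (f' t - L * t) t := fun t =>
    ((hf t).sub ((hasDerivAt_pow 2 t).const_mul (L / 2))).congr_deriv (by norm_num; ring)
  have hG : LocallyLipschitz fun t => f' t - L * t :=
    hf'.sub (by fun_prop : ContDiff ℝ 1 fun t : ℝ => L * t).locallyLipschitz
  have hsq : (fun t => f t - L / 2 * t ^ 2) =o[𝓝[>] 0] fun t => t ^ 2 := by
    rw [isLittleO_iff_tendsto' (hpos.mono fun t ht h0 => absurd h0 (by positivity))]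
    have := (h.sub_const L).div_const 2
    rw [sub_self, zero_div] at this
    refine this.congr' (hpos.mono fun t ht => ?_)
    field_simp
  have hlin := isLittleO_id_nhdsGT_of_isLittleO_sq hg hG hsq
  have := ((isLittleO_iff_tendsto' (hpos.mono fun t ht h0 => absurd h0 ht.ne')).mp hlin).add_const L
  rw [zero_add] at this
  refine this.congr' (hpos.mono fun t ht => ?_)
  field_simp
  ring

theorem tendsto_two_div_sq_mul_of_tendsto_deriv_div {f f' : ℝ → ℝ} {M : ℝ}
    (hf : ∀ t, HasDerivAt f (f' t) t) (hf0 : f 0 = 0)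
    (h : Tendsto (fun t => f' t / t) (𝓝[>] 0) (𝓝 M)) :
    Tendsto (fun t => 2 / t ^ 2 * f t) (𝓝[>] 0) (𝓝 M) := by
  have hfa : Tendsto f (𝓝[>] 0) (𝓝 0) := by
    simpa only [hf0] using ((hf 0).continuousAt.continuousWithinAt (s := Ioi 0)).tendsto
  have hga : Tendsto (fun t : ℝ => t ^ 2 / 2) (𝓝[>] 0) (𝓝 0) :=
    ((by fun_prop : Continuous fun t : ℝ => t ^ 2 / 2).tendsto' 0 0 (by simp)).mono_left
      nhdsWithin_le_nhds
  have hg : ∀ t : ℝ, HasDerivAt (fun t => t ^ 2 / 2) t t := fun t =>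
    ((hasDerivAt_pow 2 t).div_const 2).congr_deriv (by norm_num)
  have := HasDerivAt.lhopital_zero_nhdsGT (.of_forall hf) (.of_forall hg)
    (eventually_mem_nhdsWithin.mono fun t ht => ne_of_gt ht) hfa hga h
  refine this.congr fun t => ?_
  ring

theorem hasDerivAt_sub_tangent_comp_line {j : ℝ → ℝ} (hj : Differentiable ℝ j) (w z t : ℝ) :
    HasDerivAt (fun t => j (w + t * z) - j w - t * deriv j w * z)
      ((deriv j (w + t * z) - deriv j w) * z) t := by
  have hline : HasDerivAt (fun t => w + t * z) z t := by
    simpa using ((hasDerivAt_id t).mul_const z).const_add w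
  have hlin : HasDerivAt (fun t => t * deriv j w * z) (deriv j w * z) t := by
    simpa [mul_assoc] using (hasDerivAt_id t).mul_const (deriv j w * z)
  exact ((((hj _).hasDerivAt.comp t hline).sub_const (j w)).sub hlin).congr_deriv (by ring)

/-- Lemma 3.10 / `lem:quadratic_approximation_vs_second_derivative`.
Let `j ∈ C¹(ℝ)` with locally Lipschitz continuous derivative `j'` and let `w, z ∈ ℝ`.
Then the existence of
`j''(w; z) := lim_{t↓0} (2/t²)(j(w + t z) − j(w) − t j'(w) z)` in `ℝ`
is equivalent to the existence of
`D²j(w; z) := lim_{t↓0} (j'(w + t z) − j'(w))/t` in `ℝ`;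
moreover, in this case `j''(w; z) = D²j(w; z) · z`. -/
theorem second_difference_quotient_iff_derivative_difference_quotient
    (j : ℝ → ℝ) (hj : ContDiff ℝ 1 j) (hlip : LocallyLipschitz (deriv j)) (w z : ℝ) :
    ((∃ L : ℝ,
        Tendsto (fun t : ℝ => (2 / t ^ 2) * (j (w + t * z) - j w - t * deriv j w * z))
          (𝓝[>] 0) (𝓝 L)) ↔
      (∃ D : ℝ,
        Tendsto (fun t : ℝ => (deriv j (w + t * z) - deriv j w) / t) (𝓝[>] 0) (𝓝 D)))
    ∧ ∀ L D : ℝ,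
        Tendsto (fun t : ℝ => (2 / t ^ 2) * (j (w + t * z) - j w - t * deriv j w * z))
          (𝓝[>] 0) (𝓝 L) →
        Tendsto (fun t : ℝ => (deriv j (w + t * z) - deriv j w) / t) (𝓝[>] 0) (𝓝 D) →
        L = D * z := by
  have hder := hasDerivAt_sub_tangent_comp_line (hj.differentiable one_ne_zero) w z
  have hH : LocallyLipschitz fun t => (deriv j (w + t * z) - deriv j w) * z :=
    (by fun_prop : ContDiff ℝ 1 fun x : ℝ => (x - deriv j w) * z).locallyLipschitz.comp
      (hlip.comp (by fun_prop : ContDiff ℝ 1 fun t : ℝ => w + t * z).locallyLipschitz)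
  have back : ∀ D, Tendsto (fun t => (deriv j (w + t * z) - deriv j w) / t) (𝓝[>] 0) (𝓝 D) →
      Tendsto (fun t => 2 / t ^ 2 * (j (w + t * z) - j w - t * deriv j w * z))
        (𝓝[>] 0) (𝓝 (D * z)) := fun D hD =>
    tendsto_two_div_sq_mul_of_tendsto_deriv_div hder (by simp)
      (by simpa only [mul_div_right_comm] using hD.mul_const z)
  refine ⟨⟨fun ⟨L, hL⟩ => ?_, fun ⟨D, hD⟩ => ⟨D * z, back D hD⟩⟩,
    fun L D hL hD => tendsto_nhds_unique hL (back D hD)⟩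
  have hquot := tendsto_deriv_div_of_tendsto_two_div_sq_mul hder hH hL
  rcases eq_or_ne z 0 with rfl | hz
  · exact ⟨0, by simp⟩
  · refine ⟨L / z, (hquot.div_const z).congr fun t => ?_⟩
    rw [mul_div_right_comm, mul_div_cancel_right₀ _ hz]
end

section
/- Lower estimate via the preconjugate: Let Y be a Banach space, X := Y*, and let J : Y → (−∞,∞] be convex, proper and lower semicontinuous with G := J* : X → (−∞,∞] defined by G(x) := sup_{z ∈ Y} ( ⟨x, z⟩ − J(z) ). Let x ∈ dom G and w ∈ Y be such that G(y) ≥ G(x) + ⟨y − x, w⟩ for all y ∈ X, and suppose J is strongly-strongly twice epi-differentiable at w for x. Then for all h ∈ X: (1/2) G''(x, w; h) ≥ ((1/2) J''(w, x; ·))*(h), where ((1/2) J''(w, x; ·))*(h) := sup_{z ∈ Y} ( ⟨h, z⟩ − (1/2) J''(w, x; z) ). -/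
/-!
Fenchel–Young for the pair `J`, `G = J*` gives `G(x + t h') ≥ ⟨x + t h', w + t z'⟩ - J(w + t z')`.
Together with `J w + G x ≤ ⟨x, w⟩` this bounds the second-order difference quotient of `G` along
`(t, h')` from below by `2⟨h', z'⟩` minus the one of `J` along `(t, z')`. The inequality
`J w + G x ≤ ⟨x, w⟩` is where convexity and lower semicontinuity of `J` enter: otherwise a
Hahn–Banach hyperplane separating `(w, ⟨x, w⟩ - G x)` from the epigraph of `J` produces a `y`
violating the subgradient inequality `G y ≥ G x + ⟨y - x, w⟩`. Taking for `z'` the recovery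
sequence of `J''(w, x; z)` along the given `tₖ`, and using that weak-* convergent `hₖ` are bounded
(Banach–Steinhaus), so that `⟨hₖ, zₖ⟩ → ⟨h, z⟩`, the liminf gives
`2⟨h, z⟩ - J''(w, x; z) ≤ G''(x, w; h)`.
-/

open Filter Topology

/-- The strong second subderivative `J''(w, x; z)` of `J : Y → (−∞,∞]` at `w` for
`x ∈ Y*`, in direction `z`: recovery sequences converge strongly in `Y`. -/
noncomputable def strongSecondSubderiv {Y : Type*} [NormedAddCommGroup Y] [NormedSpace ℝ Y]
    (J : Y → EReal) (w : Y) (x : Y →L[ℝ] ℝ) (z : Y) : EReal :=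
  sInf { L : EReal | ∃ (t : ℕ → ℝ) (zk : ℕ → Y),
    (∀ k, 0 < t k) ∧ Tendsto t atTop (𝓝 0) ∧ Tendsto zk atTop (𝓝 z) ∧
    L = liminf (fun k => (((2 / (t k) ^ 2 : ℝ)) : EReal) *
          (J (w + t k • zk k) - J w - (((t k * x (zk k) : ℝ)) : EReal))) atTop }

/-- `J` is strongly-strongly twice epi-differentiable at `w` for `x`. -/
def StronglyStronglyTwiceEpiDiff {Y : Type*} [NormedAddCommGroup Y] [NormedSpace ℝ Y]
    (J : Y → EReal) (w : Y) (x : Y →L[ℝ] ℝ) : Prop :=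
  ∀ z : Y, ∀ t : ℕ → ℝ, (∀ k, 0 < t k) → Tendsto t atTop (𝓝 0) →
    ∃ zk : ℕ → Y, Tendsto zk atTop (𝓝 z) ∧
      Tendsto (fun k => (((2 / (t k) ^ 2 : ℝ)) : EReal) *
          (J (w + t k • zk k) - J w - (((t k * x (zk k) : ℝ)) : EReal))) atTop
        (𝓝 (strongSecondSubderiv J w x z))

namespace EReal

lemma coe_sub_inv_two_mul (p : ℝ) (Q : EReal) :
    (p : EReal) - ((2 : ℝ)⁻¹ : EReal) * Q = ((2 : ℝ)⁻¹ : EReal) * (((2 * p : ℝ) : EReal) - Q) := by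
  rw [← coe_inv]
  have h2 : (0 : ℝ) < 2⁻¹ := by norm_num
  induction Q using EReal.rec with
  | bot =>
    rw [coe_mul_bot_of_pos h2, coe_sub_bot, coe_sub_bot, coe_mul_top_of_pos h2]
  | top => simp [coe_mul_bot_of_pos h2, coe_mul_top_of_pos h2]
  | coe q =>
    norm_cast
    ring

lemma coe_sub_mul_sub_sub_le {κ c d α₁ α₂ β₁ β₂ : ℝ} (hκ : 0 < κ)
    (hd : d ≤ κ * (c - α₁ - α₂ - β₁ - β₂)) {a b : EReal} (ha : a ≠ ⊥)
    (hab : (c : EReal) - a ≤ b) :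
    (d : EReal) - κ * (a - α₁ - α₂) ≤ κ * (b - β₁ - β₂) := by
  induction a using EReal.rec with
  | bot => exact absurd rfl ha
  | top => simp [coe_mul_top_of_pos hκ]
  | coe a =>
    induction b using EReal.rec with
    | bot => exact absurd (le_bot_iff.1 hab) (coe_ne_bot _)
    | top => simp [coe_mul_top_of_pos hκ]
    | coe b =>
      norm_cast at hab ⊢
      nlinarith

lemma tendsto_coe_sub {α : Type*} {l : Filter α} {f : α → ℝ} {g : α → EReal} {p : ℝ} {Q : EReal}
    (hf : Tendsto f l (𝓝 p)) (hg : Tendsto g l (𝓝 Q)) :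
    Tendsto (fun k => (f k : EReal) - g k) l (𝓝 ((p : EReal) - Q)) :=
  (continuousAt_add (Or.inl (coe_ne_top p)) (Or.inl (coe_ne_bot p))).tendsto.comp
    ((continuous_coe_real_ereal.tendsto p |>.comp hf).prodMk_nhds hg.neg)

end EReal

lemma tendsto_apply_apply_of_tendsto_pointwise {𝕜 E F : Type*} [NontriviallyNormedField 𝕜]
    [NormedAddCommGroup E] [NormedSpace 𝕜 E] [CompleteSpace E]
    [NormedAddCommGroup F] [NormedSpace 𝕜 F] {T : ℕ → E →L[𝕜] F} {S : E → F}
    (hT : ∀ v, Tendsto (fun k => T k v) atTop (𝓝 (S v))) {v : ℕ → E} {v₀ : E}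
    (hv : Tendsto v atTop (𝓝 v₀)) :
    Tendsto (fun k => T k (v k)) atTop (𝓝 (S v₀)) := by
  obtain ⟨C, hC⟩ : ∃ C, ∀ k, ‖T k‖ ≤ C := banach_steinhaus fun u => by
    obtain ⟨C, hC⟩ := (hT u).norm.bddAbove_range
    exact ⟨C, fun k => hC ⟨k, rfl⟩⟩
  have hsmall : Tendsto (fun k => T k (v k - v₀)) atTop (𝓝 0) := by
    refine squeeze_zero_norm (fun k => ((T k).le_opNorm _).trans
      (mul_le_mul_of_nonneg_right (hC k) (norm_nonneg _))) ?_
    simpa using ((tendsto_sub_nhds_zero_iff.2 hv).norm.const_mul C)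
  simpa using hsmall.add (hT v₀)

def realEpigraph {Y : Type*} (J : Y → EReal) : Set (Y × ℝ) := {p | J p.1 ≤ p.2}

lemma LowerSemicontinuous.isClosed_realEpigraph {Y : Type*} [TopologicalSpace Y] {J : Y → EReal}
    (hJ : LowerSemicontinuous J) : IsClosed (realEpigraph J) :=
  hJ.isClosed_epigraph.preimage
    (continuous_fst.prodMk (continuous_coe_real_ereal.comp continuous_snd))

lemma convex_realEpigraph {Y : Type*} [AddCommGroup Y] [Module ℝ Y] {J : Y → EReal}
    (hJconv : ∀ z₁ z₂ : Y, ∀ θ : ℝ, 0 ≤ θ → θ ≤ 1 →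
      J (θ • z₁ + (1 - θ) • z₂) ≤ ((θ : ℝ) : EReal) * J z₁ + (((1 - θ : ℝ)) : EReal) * J z₂) :
    Convex ℝ (realEpigraph J) := by
  rintro ⟨z₁, a₁⟩ h₁ ⟨z₂, a₂⟩ h₂ θ μ hθ hμ hθμ
  obtain rfl : μ = 1 - θ := by linarith
  calc J (θ • z₁ + (1 - θ) • z₂)
      ≤ ((θ : ℝ) : EReal) * J z₁ + (((1 - θ : ℝ)) : EReal) * J z₂ := hJconv z₁ z₂ θ hθ (by linarith)
    _ ≤ ((θ : ℝ) : EReal) * a₁ + (((1 - θ : ℝ)) : EReal) * a₂ := by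
      gcongr
      exacts [h₁, h₂]
    _ = ((θ * a₁ + (1 - θ) * a₂ : ℝ) : EReal) := by norm_cast

lemma exists_separation_prod_real {Y : Type*} [NormedAddCommGroup Y] [NormedSpace ℝ Y]
    {E : Set (Y × ℝ)} (hconv : Convex ℝ E) (hclosed : IsClosed E) {q : Y × ℝ} (hq : q ∉ E) :
    ∃ (φ : Y →L[ℝ] ℝ) (s u : ℝ), (∀ p ∈ E, φ p.1 + s * p.2 < u) ∧ u < φ q.1 + s * q.2 := by
  obtain ⟨f, u, hfE, hfq⟩ := geometric_hahn_banach_closed_point hconv hclosed hq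
  have hf (p : Y × ℝ) : f p = f.comp (.inl ℝ Y ℝ) p.1 + f (0, 1) * p.2 := by
    rw [← f.comp_inl_add_comp_inr p, mul_comm, ← smul_eq_mul, ← map_smul]
    simp
  exact ⟨f.comp (.inl ℝ Y ℝ), f (0, 1), u, fun p hp => hf p ▸ hfE p hp, hf q ▸ hfq⟩

lemma nonpos_of_forall_mem_realEpigraph_lt {Y : Type*} {J : Y → EReal} {z₀ : Y} (hz₀ : J z₀ ≠ ⊤)
    {φ : Y → ℝ} {s u : ℝ} (hsep : ∀ p ∈ realEpigraph J, φ p.1 + s * p.2 < u) : s ≤ 0 := by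
  by_contra! hs
  set a := max (J z₀).toReal ((u - φ z₀) / s)
  have hmem : (z₀, a) ∈ realEpigraph J :=
    (EReal.le_coe_toReal hz₀).trans (EReal.coe_le_coe_iff.2 (le_max_left _ _))
  have hlt := hsep _ hmem
  have : (u - φ z₀) / s ≤ a := le_max_right _ _
  rw [div_le_iff₀ hs] at this
  dsimp only at hlt
  linarith

lemma apply_sub_le_conjugate {Y : Type*} [NormedAddCommGroup Y] [NormedSpace ℝ Y]
    {J : Y → EReal} {G : (Y →L[ℝ] ℝ) → EReal}
    (hG : ∀ x : Y →L[ℝ] ℝ, G x = ⨆ z : Y, (((x z : ℝ)) : EReal) - J z) (y : Y →L[ℝ] ℝ) (v : Y) :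
    ((y v : ℝ) : EReal) - J v ≤ G y :=
  (le_iSup (fun z => ((y z : ℝ) : EReal) - J z) v).trans (hG y).ge

lemma iSup_sub_le_of_forall_eq_coe {Y : Type*} {J : Y → EReal} (hJbot : ∀ z, J z ≠ ⊥)
    {φ : Y → ℝ} {c : ℝ} (h : ∀ v (a : ℝ), J v = a → φ v - a ≤ c) :
    ⨆ v, ((φ v : ℝ) : EReal) - J v ≤ c := by
  refine iSup_le fun v => ?_
  rcases eq_or_ne (J v) ⊤ with hv | hv
  · simp [hv]
  · lift J v to ℝ using ⟨hv, hJbot v⟩ with a ha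
    exact_mod_cast h v a ha.symm

theorem le_sub_conjugate_of_subgradient_conjugate {Y : Type*} [NormedAddCommGroup Y]
    [NormedSpace ℝ Y] {J : Y → EReal}
    (hJconv : ∀ z₁ z₂ : Y, ∀ θ : ℝ, 0 ≤ θ → θ ≤ 1 →
      J (θ • z₁ + (1 - θ) • z₂) ≤ ((θ : ℝ) : EReal) * J z₁ + (((1 - θ : ℝ)) : EReal) * J z₂)
    {z₀ : Y} (hz₀ : J z₀ ≠ ⊤) (hJbot : ∀ z : Y, J z ≠ ⊥) (hJlsc : LowerSemicontinuous J)
    {G : (Y →L[ℝ] ℝ) → EReal} (hG : ∀ x : Y →L[ℝ] ℝ, G x = ⨆ z : Y, (((x z : ℝ)) : EReal) - J z)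
    {x : Y →L[ℝ] ℝ} {gx : ℝ} (hgx : G x = gx) {w : Y}
    (hsub : ∀ y : Y →L[ℝ] ℝ, G x + ((((y - x) w : ℝ)) : EReal) ≤ G y) :
    J w ≤ ((x w - gx : ℝ) : EReal) := by
  by_contra! hlt
  obtain ⟨φ, s, u, hsep, hwsep⟩ := exists_separation_prod_real (convex_realEpigraph hJconv)
    hJlsc.isClosed_realEpigraph (q := (w, x w - gx)) hlt.not_ge
  have hsep_graph (v : Y) (a : ℝ) (ha : J v = a) : φ v + s * a < u := hsep (v, a) ha.le
  have hsub_of_bound (y : Y →L[ℝ] ℝ) (c : ℝ) (hc : ∀ v (a : ℝ), J v = a → y v - a ≤ c) :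
      gx + (y w - x w) ≤ c := by
    have := (hsub y).trans ((hG y).trans_le (iSup_sub_le_of_forall_eq_coe hJbot hc))
    rwa [hgx, ← EReal.coe_add, EReal.coe_le_coe_iff] at this
  dsimp only at hwsep
  rcases (nonpos_of_forall_mem_realEpigraph_lt hz₀ hsep).lt_or_eq with hs | rfl
  · -- a non-vertical hyperplane: its slope `(-s)⁻¹ • φ` violates the subgradient inequality
    have hσ : 0 < -s := neg_pos.2 hs
    have hs0 : s ≠ 0 := hs.ne
    have key := hsub_of_bound ((-s)⁻¹ • φ) ((-s)⁻¹ * u) fun v a ha => calc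
      ((-s)⁻¹ • φ) v - a = (-s)⁻¹ * (φ v + s * a) := by
        simp only [smul_apply, smul_eq_mul]
        field_simp
        ring
      _ ≤ (-s)⁻¹ * u := mul_le_mul_of_nonneg_left (hsep_graph v a ha).le (inv_nonneg.2 hσ.le)
    have := mul_le_mul_of_nonneg_left key hσ.le
    simp only [smul_apply, smul_eq_mul, mul_add, mul_sub, mul_inv_cancel_left₀ hσ.ne'] at this
    linarith
  · -- a vertical hyperplane: moving `x` in the direction `φ` violates the subgradient inequality
    have := hsub_of_bound (x + φ) (gx + u) fun v a ha => by
      have hFY := apply_sub_le_conjugate hG x v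
      rw [ha, hgx] at hFY
      have := hsep_graph v a ha
      norm_cast at hFY
      simp only [add_apply]
      linarith
    simp only [add_apply] at this
    linarith

/-- The quotient under the `liminf` in both second subderivatives; `ℓ` is the value of the
first-order term on `v`. -/
noncomputable def secondDiffQuot {E : Type*} [AddCommGroup E] [Module ℝ E] (F : E → EReal)
    (u v : E) (ℓ t : ℝ) : EReal :=
  ((2 / t ^ 2 : ℝ) : EReal) * (F (u + t • v) - F u - ((t * ℓ : ℝ) : EReal))

section SecondOrder

variable {Y : Type*} [NormedAddCommGroup Y] [NormedSpace ℝ Y] {J : Y → EReal}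
  {G : (Y →L[ℝ] ℝ) → EReal} {x : Y →L[ℝ] ℝ} {w : Y} {gx jw : ℝ}

lemma two_mul_sub_secondDiffQuot_le
    (hFY : ∀ (y : Y →L[ℝ] ℝ) (v : Y), ((y v : ℝ) : EReal) - J v ≤ G y) (hJbot : ∀ z, J z ≠ ⊥)
    (hgx : G x = gx) (hjw : J w = jw) (hxw : jw + gx ≤ x w)
    (y : Y →L[ℝ] ℝ) (v : Y) {t : ℝ} (ht : 0 < t) :
    ((2 * y v : ℝ) : EReal) - secondDiffQuot J w v (x v) t ≤ secondDiffQuot G x y (y w) t := by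
  unfold secondDiffQuot
  rw [hgx, hjw]
  refine EReal.coe_sub_mul_sub_sub_le (by positivity) ?_ (hJbot _) (hFY (x + t • y) (w + t • v))
  have hexp : 2 / t ^ 2 * ((x + t • y) (w + t • v) - jw - t * x v - gx - t * y w)
      = 2 / t ^ 2 * (x w - jw - gx) + 2 * y v := by
    simp only [add_apply, smul_apply, map_add, map_smul, smul_eq_mul]
    field_simp
    ring
  rw [hexp]
  exact le_add_of_nonneg_left (mul_nonneg (by positivity) (by linarith))

lemma two_mul_sub_strongSecondSubderiv_le [CompleteSpace Y]
    (hFY : ∀ (y : Y →L[ℝ] ℝ) (v : Y), ((y v : ℝ) : EReal) - J v ≤ G y) (hJbot : ∀ z, J z ≠ ⊥)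
    (hgx : G x = gx) (hjw : J w = jw) (hxw : jw + gx ≤ x w)
    (hepi : StronglyStronglyTwiceEpiDiff J w x) (h : Y →L[ℝ] ℝ) (z : Y) :
    ((2 * h z : ℝ) : EReal) - strongSecondSubderiv J w x z ≤ weakStarSecondSubderiv G x w h := by
  refine le_sInf ?_
  rintro _ ⟨t, y, ht, ht0, hy, rfl⟩
  obtain ⟨v, hv, hJv⟩ := hepi z t ht ht0
  have hlim := EReal.tendsto_coe_sub
    ((tendsto_apply_apply_of_tendsto_pointwise hy hv).const_mul 2) hJv
  rw [← hlim.liminf_eq]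
  exact liminf_le_liminf (.of_forall fun k =>
    two_mul_sub_secondDiffQuot_le hFY hJbot hgx hjw hxw (y k) (v k) (ht k))

end SecondOrder

/-- Lemma 4.2, `lem:lower_bound`, lower estimate via the preconjugate.
Let `Y` be a Banach space, `X = Y*`, `J : Y → (−∞,∞]` convex, proper and lower
semicontinuous, `G := J*` on `X`.  If `x ∈ dom G`, `w ∈ Y` satisfies
`G(y) ≥ G(x) + ⟨y − x, w⟩` for all `y ∈ X`, and `J` is strongly-strongly twice
epi-differentiable at `w` for `x`, then
`(1/2)G''(x, w; h) ≥ ((1/2)J''(w, x; ·))*(h)` for all `h ∈ X`. -/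
theorem lower_estimate_second_subderivative_via_preconjugate
    {Y : Type*} [NormedAddCommGroup Y] [NormedSpace ℝ Y] [CompleteSpace Y]
    (J : Y → EReal)
    (hJconv : ∀ z₁ z₂ : Y, ∀ θ : ℝ, 0 ≤ θ → θ ≤ 1 →
      J (θ • z₁ + (1 - θ) • z₂) ≤ ((θ : ℝ) : EReal) * J z₁ + (((1 - θ : ℝ)) : EReal) * J z₂)
    (hJproper : ∃ z : Y, J z ≠ ⊤) (hJbot : ∀ z : Y, J z ≠ ⊥)
    (hJlsc : LowerSemicontinuous J)
    (G : (Y →L[ℝ] ℝ) → EReal)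
    (hG : ∀ x : Y →L[ℝ] ℝ, G x = ⨆ z : Y, (((x z : ℝ)) : EReal) - J z)
    (x : Y →L[ℝ] ℝ) (hxdom : G x ≠ ⊤)
    (w : Y)
    (hsub : ∀ y : Y →L[ℝ] ℝ, G x + ((((y - x) w : ℝ)) : EReal) ≤ G y)
    (hepi : StronglyStronglyTwiceEpiDiff J w x) :
    ∀ h : Y →L[ℝ] ℝ,
      (⨆ z : Y, (((h z : ℝ)) : EReal)
          - ((2 : ℝ)⁻¹ : EReal) * strongSecondSubderiv J w x z)
        ≤ ((2 : ℝ)⁻¹ : EReal) * weakStarSecondSubderiv G x w h := by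
  intro h
  obtain ⟨z₀, hz₀⟩ := hJproper
  have hFY := apply_sub_le_conjugate hG
  have hGx : G x ≠ ⊥ := by
    lift J z₀ to ℝ using ⟨hz₀, hJbot z₀⟩ with a ha
    have := hFY x z₀
    rw [← ha, ← EReal.coe_sub] at this
    exact ne_bot_of_le_ne_bot (EReal.coe_ne_bot _) this
  obtain ⟨gx, hgx⟩ : ∃ gx : ℝ, G x = gx := ⟨(G x).toReal, (EReal.coe_toReal hxdom hGx).symm⟩
  have hJw := le_sub_conjugate_of_subgradient_conjugate hJconv hz₀ hJbot hJlsc hG hgx hsub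
  lift J w to ℝ using ⟨ne_top_of_le_ne_top (EReal.coe_ne_top _) hJw, hJbot w⟩ with jw hjw
  refine iSup_le fun z => ?_
  rw [EReal.coe_sub_inv_two_mul]
  refine mul_le_mul_of_nonneg_left ?_ (by positivity)
  exact two_mul_sub_strongSecondSubderiv_le hFY hJbot hgx hjw.symm
    (by linarith [EReal.coe_le_coe_iff.1 hJw]) hepi h z
end
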